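/- For any bounded measurable function h : T → ℝ and any probability measure π on T, log(∫ exp(h) dπ) = sup over probability measures ρ on T of (∫ h dρ − KL(ρ,π)). In particular, the supremum is attained by the Gibbs measure with density proportional to exp(h). -/

import Mathlib

/-!
Tilting `pr` by `h` gives the Gibbs measure `pr.tilted h`, and for every `ρ ≪ pr` with finite
divergence, `KL(ρ ‖ pr.tilted h) = KL(ρ ‖ pr) - ∫ h dρ + log ∫ exp h dpr`. Gibbs' inequality
`KL(ρ ‖ pr.tilted h) ≥ 0` is therefore the upper bound `∫ h dρ - KL(ρ ‖ pr) ≤ log ∫ exp h dpr`,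
with equality at `ρ = pr.tilted h`, whose log-density is `h - log ∫ exp h dpr`.
-/

open MeasureTheory Real

noncomputable section
open Classical in

/-- Kullback–Leibler divergence: `∫ log(dρ/dpr) dρ` when `ρ ≪ pr` and the
integrand is integrable, `∞` otherwise. -/
def KL {T : Type*} [MeasurableSpace T] (ρ pr : Measure T) : ENNReal :=
  if ρ ≪ pr ∧ Integrable (fun t => Real.log (ρ.rnDeriv pr t).toReal) ρ then
    ENNReal.ofReal (∫ t, Real.log (ρ.rnDeriv pr t).toReal ∂ρ)
  else ⊤

open InformationTheory

lemma KL_eq_klDiv {T : Type*} [MeasurableSpace T] {ρ pr : Measure T}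
    [IsFiniteMeasure ρ] [IsFiniteMeasure pr] (h_univ : ρ Set.univ = pr Set.univ) :
    KL ρ pr = klDiv ρ pr := by
  have h_real : ρ.real Set.univ = pr.real Set.univ := by simp [measureReal_def, h_univ]
  rw [KL, klDiv_def, h_real, add_sub_cancel_right]
  rfl

section Gibbs

variable {α : Type*} {mα : MeasurableSpace α} {μ ν : Measure α} {f : α → ℝ}

/-- **Donsker–Varadhan inequality.** -/
lemma integral_sub_toReal_klDiv_le_log_integral_exp
    [IsProbabilityMeasure μ] [IsProbabilityMeasure ν] (hμν : klDiv μ ν ≠ ⊤)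
    (hfμ : Integrable f μ) (hfν : Integrable (fun x ↦ exp (f x)) ν) :
    ∫ x, f x ∂μ - (klDiv μ ν).toReal ≤ log (∫ x, exp (f x) ∂ν) := by
  obtain ⟨hac, h_int⟩ := klDiv_ne_top_iff.mp hμν
  have : IsProbabilityMeasure (ν.tilted f) := isProbabilityMeasure_tilted hfν
  have h_gibbs := integral_llr_add_sub_measure_univ_nonneg
    (hac.trans (absolutelyContinuous_tilted hfν)) (integrable_llr_tilted_right hac hfμ h_int hfν)
  rw [integral_llr_tilted_right hac hfμ hfν h_int] at h_gibbs
  rw [toReal_klDiv_of_measure_eq hac (by simp)]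
  simp only [probReal_univ, add_sub_cancel_right] at h_gibbs
  linarith

lemma llr_tilted_left_self [SigmaFinite ν] (hfν : Integrable (fun x ↦ exp (f x)) ν) :
    llr (ν.tilted f) ν =ᵐ[ν.tilted f] fun x ↦ f x - log (∫ x, exp (f x) ∂ν) :=
  (tilted_absolutelyContinuous ν f).ae_le (log_rnDeriv_tilted_left_self hfν)

lemma klDiv_tilted_left_self_ne_top [IsFiniteMeasure ν]
    (hfν : Integrable (fun x ↦ exp (f x)) ν) (hf : Integrable f (ν.tilted f)) :
    klDiv (ν.tilted f) ν ≠ ⊤ :=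
  klDiv_ne_top (tilted_absolutelyContinuous ν f)
    ((hf.sub (integrable_const _)).congr (llr_tilted_left_self hfν).symm)

lemma integral_sub_toReal_klDiv_tilted_left_self [IsProbabilityMeasure ν]
    (hfν : Integrable (fun x ↦ exp (f x)) ν) (hf : Integrable f (ν.tilted f)) :
    ∫ x, f x ∂(ν.tilted f) - (klDiv (ν.tilted f) ν).toReal = log (∫ x, exp (f x) ∂ν) := by
  have : IsProbabilityMeasure (ν.tilted f) := isProbabilityMeasure_tilted hfν
  rw [toReal_klDiv_of_measure_eq (tilted_absolutelyContinuous ν f) (by simp),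
    integral_congr_ae (llr_tilted_left_self hfν), integral_sub hf (integrable_const _)]
  simp

end Gibbs

theorem gibbs_variational_sup {T : Type*} [MeasurableSpace T]
    (pr : Measure T) [IsProbabilityMeasure pr]
    (h : T → ℝ) (hmeas : Measurable h) (hbdd : ∃ C, ∀ t, |h t| ≤ C) :
    Real.log (∫ t, Real.exp (h t) ∂pr)
      = sSup {x : ℝ | ∃ ρ : Measure T, IsProbabilityMeasure ρ ∧ KL ρ pr < ⊤ ∧
          x = ∫ t, h t ∂ρ - (KL ρ pr).toReal}
    ∧ (∫ t, h t ∂(pr.withDensity fun t =>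
          ENNReal.ofReal (Real.exp (h t) / ∫ u, Real.exp (h u) ∂pr))
        - (KL (pr.withDensity fun t =>
            ENNReal.ofReal (Real.exp (h t) / ∫ u, Real.exp (h u) ∂pr)) pr).toReal
        = Real.log (∫ t, Real.exp (h t) ∂pr)) := by
  obtain ⟨C, hC⟩ := hbdd
  have h_int (ρ : Measure T) [IsFiniteMeasure ρ] : Integrable h ρ :=
    .of_bound hmeas.aestronglyMeasurable C (.of_forall hC)
  have hexp_int : Integrable (fun t ↦ exp (h t)) pr :=
    .of_bound hmeas.exp.aestronglyMeasurable (exp C) <| .of_forall fun t ↦ by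
      simpa using (abs_le.mp (hC t)).2
  have : IsProbabilityMeasure (pr.tilted h) := isProbabilityMeasure_tilted hexp_int
  have hKL_tilted : KL (pr.tilted h) pr = klDiv (pr.tilted h) pr := KL_eq_klDiv (by simp)
  have h_attained : ∫ t, h t ∂(pr.tilted h) - (KL (pr.tilted h) pr).toReal
      = log (∫ t, exp (h t) ∂pr) := by
    rw [hKL_tilted, integral_sub_toReal_klDiv_tilted_left_self hexp_int (h_int _)]
  have h_greatest : IsGreatest {x : ℝ | ∃ ρ : Measure T, IsProbabilityMeasure ρ ∧ KL ρ pr < ⊤ ∧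
      x = ∫ t, h t ∂ρ - (KL ρ pr).toReal} (log (∫ t, exp (h t) ∂pr)) := by
    refine ⟨⟨pr.tilted h, this, ?_, h_attained.symm⟩, ?_⟩
    · rw [hKL_tilted, lt_top_iff_ne_top]
      exact klDiv_tilted_left_self_ne_top hexp_int (h_int _)
    · rintro x ⟨ρ, hρ, hKL, rfl⟩
      rw [KL_eq_klDiv (by simp)] at hKL ⊢
      exact integral_sub_toReal_klDiv_le_log_integral_exp hKL.ne (h_int ρ) hexp_int
  exact ⟨h_greatest.csSup_eq.symm, h_attained⟩
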